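/- Unconditional energy stability of the second-order convex splitting scheme: suppose φ^{k−1}, φ^k, ψ^k are periodic grid functions with Σ_{i,j} ψ^k(i,j) = 0, and (φ^{k+1}, ψ^{k+1}) is a periodic solution of the second-order convex splitting scheme. Then Σ_{i,j} ψ^{k+1}(i,j) = 0, Σ_{i,j} ψ^{k+1/2}(i,j) = 0, and the exact energy identity F̃(φ^{k+1}, φ^k, ψ^{k+1}) + s·‖ψ^{k+1/2}‖_{−1}² + (s⁴/2)·‖∇_h(D_s²φ^k)‖₂² = F̃(φ^k, φ^{k−1}, ψ^k) holds, where D_s²φ^k = (φ^{k+1} − 2φ^k + φ^{k−1})/s². -/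

import Mathlib

open Finset

noncomputable section

/-- Periodic grid functions on an `m × n` grid (indices taken modulo `m` and `n`). -/
abbrev Grid (m n : ℕ) := ZMod m × ZMod n → ℝ

/-- Forward difference in the `x` direction. -/
def Dx {m n : ℕ} (h : ℝ) (φ : Grid m n) : Grid m n :=
  fun p => (φ (p.1 + 1, p.2) - φ p) / h

/-- Forward difference in the `y` direction. -/
def Dy {m n : ℕ} (h : ℝ) (φ : Grid m n) : Grid m n :=
  fun p => (φ (p.1, p.2 + 1) - φ p) / h

/-- The five-point discrete Laplacian. -/
def lapH {m n : ℕ} (h : ℝ) (φ : Grid m n) : Grid m n :=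
  fun p => (φ (p.1 + 1, p.2) + φ (p.1 - 1, p.2) + φ (p.1, p.2 + 1) + φ (p.1, p.2 - 1)
    - 4 * φ p) / h ^ 2

/-- The discrete chemical potential `μ` of the second-order convex splitting scheme,
built from `φ^{k−1} = φm`, `φ^k = φk` and the unknown `φ^{k+1} = φn`. -/
def chemPot {m n : ℕ} (α h : ℝ) (φm φk φn : Grid m n) : Grid m n :=
  fun p => (φn p ^ 2 + φk p ^ 2) / 2 * ((φn p + φk p) / 2)
    + α * ((φn p + φk p) / 2)
    + lapH h (fun q => 3 * φk q - φm q) p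
    + lapH h (lapH h (fun q => (φn q + φk q) / 2)) p

/-- The second-order convex splitting scheme for the MPFC equation:
`β(ψ^{k+1} − ψ^k) = s Δₕμ − s ψ^{k+1/2}` and `φ^{k+1} − φ^k = s ψ^{k+1/2}`. -/
def Scheme {m n : ℕ} (β α s h : ℝ) (φm φk ψk φn ψn : Grid m n) : Prop :=
  (∀ p, β * (ψn p - ψk p)
      = s * lapH h (chemPot α h φm φk φn) p - s * ((ψn p + ψk p) / 2)) ∧
  (∀ p, φn p - φk p = s * ((ψn p + ψk p) / 2))

/-- Discrete `L²` norm. -/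
def norm2 {m n : ℕ} [NeZero m] [NeZero n] (h : ℝ) (φ : Grid m n) : ℝ :=
  Real.sqrt (h ^ 2 * ∑ p : ZMod m × ZMod n, φ p ^ 2)

/-- Discrete `L²` norm of the gradient. -/
def gradNorm2 {m n : ℕ} [NeZero m] [NeZero n] (h : ℝ) (φ : Grid m n) : ℝ :=
  Real.sqrt (h ^ 2 * ∑ p : ZMod m × ZMod n, (Dx h φ p ^ 2 + Dy h φ p ^ 2))

/-- Discrete `L⁴` norm. -/
def norm4 {m n : ℕ} [NeZero m] [NeZero n] (h : ℝ) (φ : Grid m n) : ℝ :=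
  (h ^ 2 * ∑ p : ZMod m × ZMod n, φ p ^ 4) ^ ((1 : ℝ) / 4)

/-- The discrete MPFC energy
`F(φ) = ¼‖φ‖₄⁴ + (α/2)‖φ‖₂² − ‖∇ₕφ‖₂² + ½‖Δₕφ‖₂²`. -/
def energyF {m n : ℕ} [NeZero m] [NeZero n] (α h : ℝ) (φ : Grid m n) : ℝ :=
  1 / 4 * norm4 h φ ^ 4 + α / 2 * norm2 h φ ^ 2 - gradNorm2 h φ ^ 2
    + 1 / 2 * norm2 h (lapH h φ) ^ 2

/-- `u` is the mean-zero periodic solution of the discrete Poisson problem `−Δₕu = ψ`;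
the "−1" norm of `ψ` is then `‖∇ₕu‖₂`. -/
def IsNegLapSol {m n : ℕ} [NeZero m] [NeZero n] (h : ℝ) (ψ u : Grid m n) : Prop :=
  (∑ p : ZMod m × ZMod n, u p = 0) ∧ ∀ p, -(lapH h u p) = ψ p

/-- The modified discrete pseudo-energy
`F̃(φ, φ̃, ψ) = F(φ) + (β/2)‖ψ‖_{−1}² + ½‖∇ₕ(φ − φ̃)‖₂²`, expressed through the
mean-zero solution `u` of `−Δₕu = ψ`, so that `‖ψ‖_{−1} = ‖∇ₕu‖₂`. -/
def Ftilde {m n : ℕ} [NeZero m] [NeZero n] (β α h : ℝ) (φ φt u : Grid m n) : ℝ :=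
  energyF α h φ + β / 2 * gradNorm2 h u ^ 2
    + 1 / 2 * gradNorm2 h (fun p => φ p - φt p) ^ 2

/-!
Pair the first equation of the scheme with a potential `u^{k+1/2}`, `−Δₕu^{k+1/2} = ψ^{k+1/2}`.
Summation by parts on the torus makes `Δₕ` self-adjoint and turns `h²⟨−Δₕu, v⟩` into
`⟨∇ₕu, ∇ₕv⟩`, so the `ψ`-terms become `(β/2)(‖ψ^{k+1}‖₋₁² − ‖ψ^k‖₋₁²) + s‖ψ^{k+1/2}‖₋₁²`,
and, by the second equation, the `Δₕμ`-term becomes `−h²⟨μ, φ^{k+1} − φ^k⟩`. The convex parts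
of `μ` pair to exact differences of `¼‖φ‖₄⁴ + (α/2)‖φ‖₂² + ½‖Δₕφ‖₂²`; the extrapolated concave
part `Δₕ(3φ^k − φ^{k−1})` pairs to the difference of `−‖∇ₕφ‖₂² + ½‖∇ₕ(φ − φ̃)‖₂²` plus the
numerical dissipation `½‖∇ₕ(φ^{k+1} − 2φ^k + φ^{k−1})‖₂²`. Summing the first equation, where
`Σ Δₕμ = 0`, gives `(β + s/2) Σ ψ^{k+1} = 0`.
-/

theorem sum_mul_second_diff {G R : Type*} [AddCommGroup G] [Fintype G] [CommRing R] (e : G)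
    (f g : G → R) :
    ∑ x, f x * (g (x + e) + g (x - e) - 2 * g x)
      = -∑ x, (f (x + e) - f x) * (g (x + e) - g x) := by
  have hback := Equiv.sum_comp (Equiv.subRight e) fun x => f (x + e) * g x
  have hshift := Equiv.sum_comp (Equiv.addRight e) fun x => f x * g x
  simp only [Equiv.subRight_apply, Equiv.coe_addRight, sub_add_cancel] at hback hshift
  rw [eq_neg_iff_add_eq_zero, ← Finset.sum_add_distrib]
  calc ∑ x, (f x * (g (x + e) + g (x - e) - 2 * g x) + (f (x + e) - f x) * (g (x + e) - g x))
      = ∑ x, ((f x * g (x - e) - f (x + e) * g x) + (f (x + e) * g (x + e) - f x * g x)) :=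
        Finset.sum_congr rfl fun x _ => by ring
    _ = 0 := by
        rw [Finset.sum_add_distrib, Finset.sum_sub_distrib, Finset.sum_sub_distrib, hback, hshift]
        ring

section

variable {m n : ℕ} [NeZero m] [NeZero n]

theorem sum_mul_lapH (h : ℝ) (f g : Grid m n) :
    ∑ p, f p * lapH h g p = -∑ p, (Dx h f p * Dx h g p + Dy h f p * Dy h g p) := by
  have hx := sum_mul_second_diff ((1, 0) : ZMod m × ZMod n) f g
  have hy := sum_mul_second_diff ((0, 1) : ZMod m × ZMod n) f g
  simp only [Prod.add_def, Prod.sub_def, add_zero, sub_zero] at hx hy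
  calc ∑ p, f p * lapH h g p
      = (∑ p, f p * (g (p.1 + 1, p.2) + g (p.1 - 1, p.2) - 2 * g p)
          + ∑ p, f p * (g (p.1, p.2 + 1) + g (p.1, p.2 - 1) - 2 * g p)) / h ^ 2 := by
        rw [← Finset.sum_add_distrib, Finset.sum_div]
        exact Finset.sum_congr rfl fun p _ => by simp only [lapH]; ring
    _ = -∑ p, (Dx h f p * Dx h g p + Dy h f p * Dy h g p) := by
        rw [hx, hy, ← neg_add, ← Finset.sum_add_distrib, neg_div, Finset.sum_div]
        exact congrArg _ (Finset.sum_congr rfl fun p _ => by simp only [Dx, Dy]; ring)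

theorem sum_lapH (h : ℝ) (g : Grid m n) : ∑ p, lapH h g p = 0 := by
  simpa [Dx, Dy] using sum_mul_lapH h (fun _ => 1) g

theorem sum_lapH_mul (h : ℝ) (f g : Grid m n) :
    ∑ p, lapH h f p * g p = ∑ p, f p * lapH h g p := by
  calc ∑ p, lapH h f p * g p = ∑ p, g p * lapH h f p := by simp only [mul_comm]
    _ = ∑ p, f p * lapH h g p := by
        rw [sum_mul_lapH, sum_mul_lapH]
        exact congrArg _ (Finset.sum_congr rfl fun p _ => by ring)

def gradInner (h : ℝ) (f g : Grid m n) : ℝ :=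
  h ^ 2 * ∑ p, (Dx h f p * Dx h g p + Dy h f p * Dy h g p)

theorem sq_mul_sum_mul_lapH (h : ℝ) (f g : Grid m n) :
    h ^ 2 * ∑ p, f p * lapH h g p = -gradInner h f g := by
  rw [sum_mul_lapH, gradInner, mul_neg]

theorem gradNorm2_sq (h : ℝ) (f : Grid m n) : gradNorm2 h f ^ 2 = gradInner h f f := by
  rw [gradNorm2, Real.sq_sqrt (by positivity), gradInner]
  simp only [← sq]

theorem norm2_sq (h : ℝ) (f : Grid m n) : norm2 h f ^ 2 = h ^ 2 * ∑ p, f p ^ 2 :=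
  Real.sq_sqrt (by positivity)

theorem norm4_pow_four (h : ℝ) (f : Grid m n) : norm4 h f ^ 4 = h ^ 2 * ∑ p, f p ^ 4 := by
  rw [norm4, ← Real.rpow_natCast, ← Real.rpow_mul (by positivity)]
  norm_num

theorem gradNorm2_div_sq (h c : ℝ) (f : Grid m n) :
    gradNorm2 h (fun p => f p / c) ^ 2 = gradNorm2 h f ^ 2 / c ^ 2 := by
  simp only [gradNorm2_sq, gradInner, mul_div_assoc, Finset.sum_div]
  exact congrArg _ (Finset.sum_congr rfl fun p _ => by simp only [Dx, Dy]; ring)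

theorem sq_mul_sum_lapH_extrap_mul_sub (h : ℝ) (φm φk φn : Grid m n) :
    h ^ 2 * ∑ p, lapH h (fun q => 3 * φk q - φm q) p * (φn p - φk p)
      = gradInner h φk φk - gradInner h φn φn
        + (gradInner h (fun p => φn p - φk p) (fun p => φn p - φk p)
          - gradInner h (fun p => φk p - φm p) (fun p => φk p - φm p)) / 2
        + gradInner h (fun p => φn p - 2 * φk p + φm p) (fun p => φn p - 2 * φk p + φm p) / 2 := by
  rw [sum_lapH_mul, sq_mul_sum_mul_lapH (f := fun q => 3 * φk q - φm q)]
  -- pointwise: `2(3y − z)(x − y) = 2x² − 2y² − (x − y)² + (y − z)² − (x − 2y + z)²`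
  simp only [gradInner, ← mul_sub, mul_div_assoc, ← mul_add, ← mul_neg, Finset.sum_div,
    ← Finset.sum_sub_distrib, ← Finset.sum_add_distrib, ← Finset.sum_neg_distrib]
  exact congrArg _ (Finset.sum_congr rfl fun p _ => by simp only [Dx, Dy]; ring)

theorem sq_mul_sum_biharm_mid_mul_sub (h : ℝ) (φk φn : Grid m n) :
    h ^ 2 * ∑ p, lapH h (lapH h (fun q => (φn q + φk q) / 2)) p * (φn p - φk p)
      = 1 / 2 * norm2 h (lapH h φn) ^ 2 - 1 / 2 * norm2 h (lapH h φk) ^ 2 := by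
  rw [sum_lapH_mul, norm2_sq, norm2_sq]
  have hpt : ∀ p, lapH h (fun q => (φn q + φk q) / 2) p * lapH h (fun q => φn q - φk q) p
      = (lapH h φn p ^ 2 - lapH h φk p ^ 2) / 2 := fun p => by simp only [lapH]; ring
  simp only [hpt, ← Finset.sum_div, Finset.sum_sub_distrib]
  ring

theorem sq_mul_sum_chemPot_mul_sub (α h : ℝ) (φm φk φn : Grid m n) :
    h ^ 2 * ∑ p, chemPot α h φm φk φn p * (φn p - φk p)
      = energyF α h φn + 1 / 2 * gradNorm2 h (fun p => φn p - φk p) ^ 2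
        - (energyF α h φk + 1 / 2 * gradNorm2 h (fun p => φk p - φm p) ^ 2)
        + 1 / 2 * gradNorm2 h (fun p => φn p - 2 * φk p + φm p) ^ 2 := by
  have hsplit : ∑ p, chemPot α h φm φk φn p * (φn p - φk p)
      = ∑ p, ((φn p ^ 4 - φk p ^ 4) / 4 + α / 2 * (φn p ^ 2 - φk p ^ 2))
        + ∑ p, lapH h (fun q => 3 * φk q - φm q) p * (φn p - φk p)
        + ∑ p, lapH h (lapH h (fun q => (φn q + φk q) / 2)) p * (φn p - φk p) := by
    rw [← Finset.sum_add_distrib, ← Finset.sum_add_distrib]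
    exact Finset.sum_congr rfl fun p _ => by simp only [chemPot]; ring
  rw [hsplit, mul_add, mul_add, sq_mul_sum_lapH_extrap_mul_sub, sq_mul_sum_biharm_mid_mul_sub]
  simp only [energyF, norm4_pow_four, norm2_sq, gradNorm2_sq, Finset.sum_add_distrib,
    ← Finset.sum_div, ← Finset.mul_sum, Finset.sum_sub_distrib]
  ring

theorem sq_mul_sum_sub_mul_mid {h : ℝ} {ψk ψn uk un uhalf : Grid m n}
    (hun : ∀ p, -lapH h un p = ψn p) (huk : ∀ p, -lapH h uk p = ψk p)
    (huhalf : ∀ p, -lapH h uhalf p = (ψn p + ψk p) / 2) :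
    h ^ 2 * ∑ p, (ψn p - ψk p) * uhalf p
      = (gradNorm2 h un ^ 2 - gradNorm2 h uk ^ 2) / 2 := by
  have hmid : ∀ p, lapH h uhalf p = lapH h (fun q => (un q + uk q) / 2) p := fun p => by
    have hlin : lapH h (fun q => (un q + uk q) / 2) p = (lapH h un p + lapH h uk p) / 2 := by
      simp only [lapH]; ring
    linarith [huhalf p, hun p, huk p]
  calc h ^ 2 * ∑ p, (ψn p - ψk p) * uhalf p
      = -(h ^ 2 * ∑ p, lapH h (fun q => un q - uk q) p * uhalf p) := by
        rw [← mul_neg, ← Finset.sum_neg_distrib]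
        refine congrArg _ (Finset.sum_congr rfl fun p _ => ?_)
        rw [← hun p, ← huk p]
        simp only [lapH]
        ring
    _ = -(h ^ 2 * ∑ p, (un p - uk p) * lapH h (fun q => (un q + uk q) / 2) p) := by
        simp only [sum_lapH_mul, hmid]
    _ = (gradNorm2 h un ^ 2 - gradNorm2 h uk ^ 2) / 2 := by
        rw [sq_mul_sum_mul_lapH (f := fun p => un p - uk p), neg_neg, gradNorm2_sq, gradNorm2_sq]
        simp only [gradInner, ← mul_sub, mul_div_assoc, Finset.sum_div, ← Finset.sum_sub_distrib]
        exact congrArg _ (Finset.sum_congr rfl fun p _ => by simp only [Dx, Dy]; ring)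

theorem Scheme.sum_eq_zero {β α s h : ℝ} {φm φk ψk φn ψn : Grid m n} (hβ : 0 < β) (hs : 0 < s)
    (hψk : ∑ p, ψk p = 0) (hS : Scheme β α s h φm φk ψk φn ψn) : ∑ p, ψn p = 0 := by
  have hsum := Finset.sum_congr rfl fun p (_ : p ∈ Finset.univ) => hS.1 p
  simp only [← Finset.mul_sum, Finset.sum_sub_distrib, ← Finset.sum_div, Finset.sum_add_distrib,
    sum_lapH, hψk] at hsum
  have hmul : (β + s / 2) * ∑ p, ψn p = 0 := by linear_combination hsum
  exact (mul_eq_zero.1 hmul).resolve_left (by positivity)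

theorem Scheme.negNorm_sq_balance {β α s h : ℝ} {φm φk ψk φn ψn uk un uhalf : Grid m n}
    (hS : Scheme β α s h φm φk ψk φn ψn)
    (hun : ∀ p, -lapH h un p = ψn p) (huk : ∀ p, -lapH h uk p = ψk p)
    (huhalf : ∀ p, -lapH h uhalf p = (ψn p + ψk p) / 2) :
    β / 2 * (gradNorm2 h un ^ 2 - gradNorm2 h uk ^ 2) + s * gradNorm2 h uhalf ^ 2
      = -(h ^ 2 * ∑ p, chemPot α h φm φk φn p * (φn p - φk p)) := by
  have htested : β * ∑ p, (ψn p - ψk p) * uhalf p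
      = s * ∑ p, chemPot α h φm φk φn p * lapH h uhalf p
        - s * ∑ p, (ψn p + ψk p) / 2 * uhalf p := by
    simp only [Finset.mul_sum, ← sum_lapH_mul, ← Finset.sum_sub_distrib]
    exact Finset.sum_congr rfl fun p _ => by rw [← mul_assoc, hS.1 p]; ring
  have hpot : s * ∑ p, chemPot α h φm φk φn p * lapH h uhalf p
      = -∑ p, chemPot α h φm φk φn p * (φn p - φk p) := by
    simp only [Finset.mul_sum, ← Finset.sum_neg_distrib]
    exact Finset.sum_congr rfl fun p _ => by rw [hS.2 p, ← huhalf p]; ring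
  have hhalf : h ^ 2 * ∑ p, (ψn p + ψk p) / 2 * uhalf p = gradNorm2 h uhalf ^ 2 := by
    simp only [← huhalf, neg_mul, Finset.sum_neg_distrib, mul_comm (lapH h uhalf _)]
    rw [mul_neg, sq_mul_sum_mul_lapH, neg_neg, gradNorm2_sq]
  have hψ := sq_mul_sum_sub_mul_mid hun huk huhalf
  rw [hpot] at htested
  linear_combination h ^ 2 * htested - β * hψ - s * hhalf

end

theorem scheme_energy_stability_general (m n : ℕ) [NeZero m] [NeZero n]
    (β α s h : ℝ) (hβ : 0 < β) (hs : 0 < s)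
    (φm φk ψk φn ψn : Grid m n)
    (hψk : ∑ p : ZMod m × ZMod n, ψk p = 0)
    (hScheme : Scheme β α s h φm φk ψk φn ψn) :
    (∑ p : ZMod m × ZMod n, ψn p = 0) ∧
    (∑ p : ZMod m × ZMod n, (ψn p + ψk p) / 2 = 0) ∧
    ∀ uhalf un uk : Grid m n,
      IsNegLapSol h (fun p => (ψn p + ψk p) / 2) uhalf →
      IsNegLapSol h ψn un → IsNegLapSol h ψk uk →
      Ftilde β α h φn φk un + s * gradNorm2 h uhalf ^ 2
          + s ^ 4 / 2
            * gradNorm2 h (fun p => (φn p - 2 * φk p + φm p) / s ^ 2) ^ 2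
        = Ftilde β α h φk φm uk := by
  have hψn := hScheme.sum_eq_zero hβ hs hψk
  refine ⟨hψn, by rw [← Finset.sum_div, Finset.sum_add_distrib, hψn, hψk]; norm_num, ?_⟩
  intro uhalf un uk huhalf hun huk
  have hψ := hScheme.negNorm_sq_balance hun.2 huk.2 huhalf.2
  have hφ := sq_mul_sum_chemPot_mul_sub α h φm φk φn
  have hD : s ^ 4 / 2 * gradNorm2 h (fun p => (φn p - 2 * φk p + φm p) / s ^ 2) ^ 2
      = 1 / 2 * gradNorm2 h (fun p => φn p - 2 * φk p + φm p) ^ 2 := by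
    rw [gradNorm2_div_sq]
    field_simp
  rw [Ftilde, Ftilde, hD]
  linear_combination hψ - hφ

/-- Unconditional energy stability of the second-order convex splitting scheme:
`ψ^{k+1}` and `ψ^{k+1/2}` have zero mean, and the exact pseudo-energy identity
`F̃(φ^{k+1}, φ^k, ψ^{k+1}) + s‖ψ^{k+1/2}‖₋₁² + (s⁴/2)‖∇ₕ(Dₛ²φ^k)‖₂²
  = F̃(φ^k, φ^{k−1}, ψ^k)` holds. -/
theorem scheme_energy_stability (m n : ℕ) [NeZero m] [NeZero n]
    (β α s h : ℝ) (hβ : 0 < β) (hα : 0 < α) (hs : 0 < s) (hh : 0 < h)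
    (φm φk ψk φn ψn : Grid m n)
    (hψk : ∑ p : ZMod m × ZMod n, ψk p = 0)
    (hScheme : Scheme β α s h φm φk ψk φn ψn) :
    (∑ p : ZMod m × ZMod n, ψn p = 0) ∧
    (∑ p : ZMod m × ZMod n, (ψn p + ψk p) / 2 = 0) ∧
    ∀ uhalf un uk : Grid m n,
      IsNegLapSol h (fun p => (ψn p + ψk p) / 2) uhalf →
      IsNegLapSol h ψn un → IsNegLapSol h ψk uk →
      Ftilde β α h φn φk un + s * gradNorm2 h uhalf ^ 2
          + s ^ 4 / 2
            * gradNorm2 h (fun p => (φn p - 2 * φk p + φm p) / s ^ 2) ^ 2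
        = Ftilde β α h φk φm uk :=
  scheme_energy_stability_general m n β α s h hβ hs φm φk ψk φn ψn hψk hScheme
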